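/- arXiv:2008.06155 — 10 statements merged into one kernel-verified Lean document; each statement's English description precedes it below -/
import Mathlib

section
/- For all nonnegative integers n and r and every real (or polynomial variable) x, the rising factorial satisfies ⟨x+2r⟩_n = Σ_{k=0}^{n} L_r(n,k) * (x)_k, where ⟨y⟩_n = y(y+1)···(y+n-1) is the rising factorial and (x)_k = x(x-1)···(x-k+1) is the falling factorial. -/
open Finset

/-- The `r`-Lah numbers `L_r(n,k) = (n!/k!) * C(n+2r-1, k+2r-1)` for `k ≤ n`, and `0` otherwise. -/
def rLah (r n k : ℕ) : ℕ :=
  if k ≤ n then n.factorial / k.factorial * Nat.choose (n + 2 * r - 1) (n - k) else 0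

/-- Stirling numbers of the second kind. -/
def stirling2 : ℕ → ℕ → ℕ
  | 0, 0 => 1
  | 0, _ + 1 => 0
  | _ + 1, 0 => 0
  | n + 1, k + 1 => (k + 1) * stirling2 n (k + 1) + stirling2 n k

/-- Signed Stirling numbers of the first kind, satisfying `(x)_n = Σ_k s(n,k) x^k`. -/
def stirling1 : ℕ → ℕ → ℤ
  | 0, 0 => 1
  | 0, _ + 1 => 0
  | _ + 1, 0 => 0
  | n + 1, k + 1 => stirling1 n k - (n : ℤ) * stirling1 n (k + 1)

/-- Bell numbers. -/
def bell (n : ℕ) : ℕ := ∑ k ∈ Finset.range (n + 1), stirling2 n k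

/-- The `r`-extended Bell numbers `B_{n,r} = Σ_k C(n,k) r^(n-k) B_k`. -/
def bellExt (n r : ℕ) : ℕ :=
  ∑ k ∈ Finset.range (n + 1), Nat.choose n k * r ^ (n - k) * bell k

/-- The `r`-extended Lah-Bell numbers `B^L_{n,r} = Σ_{k=0}^n L_r(n,k)`. -/
def lahBellExt (n r : ℕ) : ℕ := ∑ k ∈ Finset.range (n + 1), rLah r n k

/-- Stirling polynomials of the second kind `S₂(n,k|x) = Σ_j C(n,j) x^(n-j) S₂(j,k)`,
evaluated at a natural number `x`. -/
def stirling2Poly (n k x : ℕ) : ℕ :=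
  ∑ j ∈ Finset.Icc k n, Nat.choose n j * x ^ (n - j) * stirling2 j k


/-! Since `⟨y⟩_n = (y + n - 1)_n`, the left side is `(x + (2r + n - 1))_n`, and the
Chu–Vandermonde identity for falling factorials splits it as
`Σ_k C(n,k) (x)_k (n + 2r - 1)_{n-k}`; the coefficient `C(n,k) (n + 2r - 1)_{n-k}` is exactly
`L_r(n,k) = (n!/k!) C(n + 2r - 1, n - k)`. -/

open Polynomial

section Pochhammer

variable {R : Type*} [CommRing R]

theorem descPochhammer_eval_eq_smeval (r : R) (n : ℕ) :
    (descPochhammer R n).eval r = (descPochhammer ℤ n).smeval r := by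
  rw [← descPochhammer_map (algebraMap ℤ R), eval_map_algebraMap, aeval_eq_smeval]

theorem descPochhammer_eval_add (r s : R) (n : ℕ) :
    (descPochhammer R n).eval (r + s) = ∑ k ∈ range (n + 1),
      (n.choose k : R) * (descPochhammer R k).eval r * (descPochhammer R (n - k)).eval s := by
  simp only [descPochhammer_eval_eq_smeval, Ring.descPochhammer_smeval_add n (Commute.all r s),
    Nat.sum_antidiagonal_eq_sum_range_succ_mk, mul_assoc]

theorem ascPochhammer_eval_add (x y : R) (n : ℕ) :
    (ascPochhammer R n).eval (x + y) = ∑ k ∈ range (n + 1),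
      (n.choose k : R) * (descPochhammer R k).eval x *
        (descPochhammer R (n - k)).eval (y + n - 1) := by
  rw [← descPochhammer_eval_add, descPochhammer_eval_eq_ascPochhammer]
  congr 1
  ring

end Pochhammer

theorem rLah_eq_choose_mul_descFactorial (r : ℕ) {n k : ℕ} (h : k ≤ n) :
    rLah r n k = n.choose k * (n + 2 * r - 1).descFactorial (n - k) := by
  have hfact : n.factorial / k.factorial = n.choose k * (n - k).factorial :=
    Nat.div_eq_of_eq_mul_left k.factorial_pos
      (by rw [mul_right_comm, Nat.choose_mul_factorial_mul_factorial h])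
  rw [rLah, if_pos h, hfact, Nat.descFactorial_eq_factorial_mul_choose, mul_assoc]

/-- `⟨x+2r⟩_n = Σ_{k=0}^n L_r(n,k) (x)_k`, where `⟨y⟩_n` is the rising factorial and
`(x)_k` the falling factorial. -/
theorem ascFactorial_eq_sum_rLah_descFactorial (n r : ℕ) (x : ℝ) :
    (ascPochhammer ℝ n).eval (x + 2 * r) =
      ∑ k ∈ Finset.range (n + 1), (rLah r n k : ℝ) * (descPochhammer ℝ k).eval x := by
  -- `n + 2 * r - 1` is truncated in `ℕ` when `n = 0`, so that case is done apart.
  rcases n with _ | n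
  · simp [rLah]
  have hshift : (2 * r : ℝ) + (n + 1 : ℕ) - 1 = ((n + 1 + 2 * r - 1 : ℕ) : ℝ) := by
    rw [Nat.add_right_comm, Nat.add_sub_cancel]
    push_cast
    ring
  rw [ascPochhammer_eval_add, hshift]
  refine sum_congr rfl fun k hk => ?_
  rw [rLah_eq_choose_mul_descFactorial r (Nat.lt_succ_iff.mp (mem_range.mp hk)),
    descPochhammer_eval_eq_descFactorial]
  push_cast
  ring
end

section
/- For every nonnegative integer n and r, the r-extended Lah-Bell number satisfies the Dobinski-like formula B^L_{n,r} = (1/e) * Σ_{k=0}^{∞} ⟨k+2r⟩_n / k!, where the series converges. -/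
open Finset

/-! Writing `⟨m + 2r⟩_n = n! · C(m + n + 2r - 1, n)` and expanding the binomial by Vandermonde
gives `⟨m + 2r⟩_n = Σ_k L_r(n,k) · (m)_k`. Since `Σ_m (m)_k / m! = e` for every `k`, summing
over `m` turns the finite sum into `e · B^L_{n,r}`. -/

open scoped Nat

theorem rLah_mul_descFactorial (r m : ℕ) {n k : ℕ} (hk : k ≤ n) :
    rLah r n k * m.descFactorial k = n ! * (m.choose k * (n + 2 * r - 1).choose (n - k)) := by
  obtain ⟨q, hq⟩ := Nat.factorial_dvd_factorial hk
  rw [rLah, if_pos hk, Nat.descFactorial_eq_factorial_mul_choose, hq,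
    Nat.mul_div_cancel_left _ k.factorial_pos]
  ring

theorem ascFactorial_add_eq_sum_rLah_mul_descFactorial (n r m : ℕ) :
    (m + 2 * r).ascFactorial n = ∑ k ∈ range (n + 1), rLah r n k * m.descFactorial k := by
  rcases Nat.eq_zero_or_pos n with rfl | hn
  · simp [rLah]
  have vandermonde := Nat.add_choose_eq m (n + 2 * r - 1) n
  rw [Nat.sum_antidiagonal_eq_sum_range_succ_mk] at vandermonde
  rw [sum_congr rfl fun k hk => rLah_mul_descFactorial r m (Nat.lt_succ_iff.mp (mem_range.mp hk)),
    ← mul_sum, ← vandermonde, Nat.ascFactorial_eq_factorial_mul_choose']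
  congr 2
  omega

theorem hasSum_descFactorial_mul_pow_div_factorial {𝕂 : Type*} [RCLike 𝕂] (k : ℕ) (x : 𝕂) :
    HasSum (fun m : ℕ => (m.descFactorial k : 𝕂) * x ^ m / m !) (x ^ k * NormedSpace.exp x) := by
  rw [← hasSum_nat_add_iff' k]
  have shifted : ∀ j,
      ((j + k).descFactorial k : 𝕂) * x ^ (j + k) / (j + k)! = x ^ k * (x ^ j / j !) := by
    intro j
    have hfact : (j + k)! = (j + k).descFactorial k * j ! := by
      rw [mul_comm, ← Nat.factorial_mul_descFactorial (Nat.le_add_left k j), Nat.add_sub_cancel]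
    have hdesc : ((j + k).descFactorial k : 𝕂) ≠ 0 :=
      Nat.cast_ne_zero.mpr (Nat.descFactorial_pos.mpr (Nat.le_add_left k j)).ne'
    rw [hfact, Nat.cast_mul]
    field_simp
    ring
  have below : ∀ i ∈ range k, (i.descFactorial k : 𝕂) * x ^ i / i ! = 0 := fun i hi => by
    simp [Nat.descFactorial_of_lt (mem_range.mp hi)]
  simpa [shifted, sum_eq_zero below] using (NormedSpace.expSeries_div_hasSum_exp x).mul_left (x ^ k)

theorem hasSum_ascFactorial_div_factorial (n r : ℕ) :
    HasSum (fun m : ℕ => ((m + 2 * r).ascFactorial n : ℝ) / m !) (lahBellExt n r * Real.exp 1) := by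
  have termwise : ∀ k, HasSum (fun m : ℕ => (m.descFactorial k : ℝ) / m !) (Real.exp 1) := by
    intro k
    simpa [Real.exp_eq_exp_ℝ] using hasSum_descFactorial_mul_pow_div_factorial k (1 : ℝ)
  have expand : (fun m : ℕ => ((m + 2 * r).ascFactorial n : ℝ) / m !) =
      fun m => ∑ k ∈ range (n + 1), (rLah r n k : ℝ) * ((m.descFactorial k : ℝ) / m !) := by
    funext m
    rw [ascFactorial_add_eq_sum_rLah_mul_descFactorial n r m, Nat.cast_sum, sum_div]
    simp only [Nat.cast_mul, mul_div_assoc]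
  rw [expand, lahBellExt, Nat.cast_sum, sum_mul]
  exact hasSum_sum fun k _ => (termwise k).mul_left _

/-- Dobinski-like formula: `B^L_{n,r} = (1/e) Σ_{k=0}^∞ ⟨k+2r⟩_n / k!`, and the series
converges. -/
theorem lahBellExt_dobinski (n r : ℕ) :
    Summable (fun k : ℕ => ((k + 2 * r).ascFactorial n : ℝ) / k.factorial) ∧
    (lahBellExt n r : ℝ) =
      (1 / Real.exp 1) * ∑' k : ℕ, ((k + 2 * r).ascFactorial n : ℝ) / k.factorial := by
  have h := hasSum_ascFactorial_div_factorial n r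
  refine ⟨h.summable, ?_⟩
  rw [h.tsum_eq]
  field_simp
end

section
/- For every nonnegative integer n, r and every real x, the r-extended Lah-Bell polynomial satisfies B^L_{n,r}(x) = e^{-x} * Σ_{k=0}^{∞} ⟨k+2r⟩_n * x^k / k!, where the series converges. -/
/-!
Expanding the rising factorial in the falling factorial basis gives
`⟨k + 2r⟩_n = Σ_j L_r(n,j) (k)_j` (Vandermonde's convolution), and
`Σ_k (k)_j x^k / k! = x^j e^x`. Summing the finitely many series term by term yields
`Σ_k ⟨k + 2r⟩_n x^k / k! = e^x B^L_{n,r}(x)`.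
-/

open Finset

theorem ascFactorial_add_two_mul_eq_sum_rLah_mul_descFactorial (r n k : ℕ) :
    (k + 2 * r).ascFactorial n = ∑ j ∈ range (n + 1), rLah r n j * k.descFactorial j := by
  rcases n with _ | m
  · simp [rLah]
  have h_choose : (k + 2 * r).ascFactorial (m + 1)
      = (m + 1).factorial * (k + (2 * r + m)).choose (m + 1) := by
    rw [Nat.ascFactorial_eq_factorial_mul_choose']
    congr 2
    omega
  rw [h_choose, Nat.add_choose_eq, Nat.sum_antidiagonal_eq_sum_range_succ_mk, mul_sum]
  refine sum_congr rfl fun j hj => ?_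
  have hjm : j ≤ m + 1 := Nat.lt_succ_iff.mp (mem_range.mp hj)
  have h_div : (m + 1).factorial / j.factorial * j.factorial = (m + 1).factorial :=
    Nat.div_mul_cancel (Nat.factorial_dvd_factorial hjm)
  rw [rLah, if_pos hjm, Nat.descFactorial_eq_factorial_mul_choose,
    show m + 1 + 2 * r - 1 = 2 * r + m by omega]
  nth_rw 1 [← h_div]
  ring

theorem hasSum_descFactorial_mul_pow_div_factorial_s4 (j : ℕ) (x : ℝ) :
    HasSum (fun k : ℕ => (k.descFactorial j : ℝ) * x ^ k / k.factorial)
      (x ^ j * Real.exp x) := by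
  rw [← hasSum_nat_add_iff' j]
  have h_head : ∑ k ∈ range j, (k.descFactorial j : ℝ) * x ^ k / k.factorial = 0 :=
    sum_eq_zero fun k hk => by
      rw [Nat.descFactorial_eq_zero_iff_lt.mpr (mem_range.mp hk)]
      simp
  have h_shift (k : ℕ) : ((k + j).descFactorial j : ℝ) * x ^ (k + j) / (k + j).factorial
      = x ^ j * (x ^ k / k.factorial) := by
    have h_fact : ((k + j).factorial : ℝ) = k.factorial * (k + j).descFactorial j := by
      exact_mod_cast (Nat.add_sub_cancel k j ▸ Nat.factorial_mul_descFactorial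
        (Nat.le_add_left j k)).symm
    rw [h_fact, pow_add]
    field_simp
  rw [h_head, sub_zero, funext h_shift, Real.exp_eq_exp_ℝ]
  exact (NormedSpace.expSeries_div_hasSum_exp x).mul_left _

theorem hasSum_ascFactorial_mul_pow_div_factorial (r n : ℕ) (x : ℝ) :
    HasSum (fun k : ℕ => ((k + 2 * r).ascFactorial n : ℝ) * x ^ k / k.factorial)
      (Real.exp x * ∑ j ∈ range (n + 1), (rLah r n j : ℝ) * x ^ j) := by
  have h_expand (k : ℕ) : ((k + 2 * r).ascFactorial n : ℝ) * x ^ k / k.factorial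
      = ∑ j ∈ range (n + 1), (rLah r n j : ℝ) * ((k.descFactorial j : ℝ) * x ^ k / k.factorial) := by
    rw [ascFactorial_add_two_mul_eq_sum_rLah_mul_descFactorial]
    push_cast
    rw [sum_mul, sum_div]
    exact sum_congr rfl fun j _ => by ring
  have h_value : Real.exp x * ∑ j ∈ range (n + 1), (rLah r n j : ℝ) * x ^ j
      = ∑ j ∈ range (n + 1), (rLah r n j : ℝ) * (x ^ j * Real.exp x) := by
    rw [mul_sum]
    exact sum_congr rfl fun j _ => by ring
  rw [funext h_expand, h_value]
  exact hasSum_sum fun j _ =>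
    (hasSum_descFactorial_mul_pow_div_factorial_s4 j x).mul_left (rLah r n j : ℝ)

/-- Dobinski-like formula for the `r`-extended Lah-Bell polynomials:
`B^L_{n,r}(x) = e^{-x} Σ_{k=0}^∞ ⟨k+2r⟩_n x^k / k!`, and the series converges. -/
theorem lahBellExt_poly_dobinski (n r : ℕ) (x : ℝ) :
    Summable (fun k : ℕ => ((k + 2 * r).ascFactorial n : ℝ) * x ^ k / k.factorial) ∧
    ∑ k ∈ Finset.range (n + 1), (rLah r n k : ℝ) * x ^ k =
      Real.exp (-x) *
        ∑' k : ℕ, ((k + 2 * r).ascFactorial n : ℝ) * x ^ k / k.factorial := by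
  have h_sum := hasSum_ascFactorial_mul_pow_div_factorial r n x
  refine ⟨h_sum.summable, ?_⟩
  rw [h_sum.tsum_eq, ← mul_assoc, ← Real.exp_add, neg_add_cancel, Real.exp_zero, one_mul]
end

section
/- For all nonnegative integers n, r, B^L_{n,r} = Σ_{k=0}^{n} (-1)^{n-k} s(n,k) B_{k,2r}, where s(n,k) are the (signed) Stirling numbers of the first kind and B_{k,2r} are the 2r-extended Bell numbers. -/
/-!
Let `φ : ℤ[X] → ℤ` be the linear functional with `φ (X ^ j) = B_j`. Since
`X ^ n = Σ_k S(n,k) (X)_k` and `B_n = Σ_k S(n,k)`, induction on `k` gives `φ ((X)_k) = 1`,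
while the binomial theorem gives `φ ((X + c) ^ n) = B_{n,c}`. The rising factorial
`(X + 2r)^(n)` expands in falling factorials as `Σ_k L_r(n,k) (X)_k` (Vandermonde's identity)
and in powers of `X + 2r` as `Σ_k |s(n,k)| (X + 2r)^k`; applying `φ` to both expansions gives
the identity.
-/

open Finset

open Polynomial

theorem stirling2_eq_stirlingSecond : ∀ n k, stirling2 n k = Nat.stirlingSecond n k
  | 0, 0 | 0, _ + 1 | _ + 1, 0 => rfl
  | n + 1, k + 1 => by
    rw [stirling2, Nat.stirlingSecond_succ_succ, stirling2_eq_stirlingSecond n k,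
      stirling2_eq_stirlingSecond n (k + 1)]

theorem stirling1_eq_neg_one_pow_mul_stirlingFirst :
    ∀ n k, stirling1 n k = (-1) ^ (n + k) * Nat.stirlingFirst n k
  | 0, 0 | 0, _ + 1 | _ + 1, 0 => by simp [stirling1]
  | n + 1, k + 1 => by
    rw [stirling1, Nat.stirlingFirst_succ_succ, stirling1_eq_neg_one_pow_mul_stirlingFirst n k,
      stirling1_eq_neg_one_pow_mul_stirlingFirst n (k + 1)]
    push_cast
    ring

theorem X_mul_descPochhammer (R : Type*) [Ring R] (k : ℕ) :
    (X : R[X]) * descPochhammer R k = descPochhammer R (k + 1) + k * descPochhammer R k := by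
  rw [descPochhammer_succ_right, mul_sub, ← X_mul, Nat.cast_comm]
  abel

theorem X_pow_eq_sum_stirlingSecond_mul_descPochhammer (R : Type*) [Ring R] (n : ℕ) :
    (X : R[X]) ^ n =
      ∑ k ∈ range (n + 1), (Nat.stirlingSecond n k : R[X]) * descPochhammer R k := by
  induction n with
  | zero => simp
  | succ n ih =>
    let g : ℕ → R[X] := fun k => (k * Nat.stirlingSecond n k : ℕ) * descPochhammer R k
    have hshift : ∑ k ∈ range (n + 1), g (k + 1) = ∑ k ∈ range (n + 1), g k := by
      have h := sum_range_succ' g (n + 1)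
      rw [sum_range_succ] at h
      simpa [g, Nat.stirlingSecond_eq_zero_of_lt n.lt_succ_self] using h.symm
    calc (X : R[X]) ^ (n + 1)
        = ∑ k ∈ range (n + 1), (Nat.stirlingSecond n k : R[X]) * (X * descPochhammer R k) := by
          rw [pow_succ', ih, mul_sum]
          refine sum_congr rfl fun k _ => ?_
          rw [← mul_assoc, ← mul_assoc, Nat.cast_comm]
      _ = ∑ k ∈ range (n + 1), (Nat.stirlingSecond n k : R[X]) * descPochhammer R (k + 1)
            + ∑ k ∈ range (n + 1), g (k + 1) := by
          rw [hshift, ← sum_add_distrib]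
          refine sum_congr rfl fun k _ => ?_
          rw [X_mul_descPochhammer, mul_add, ← mul_assoc, ← Nat.cast_mul, mul_comm]
      _ = _ := by
          rw [sum_range_succ' _ (n + 1), ← sum_add_distrib]
          simp [g, Nat.stirlingSecond_succ_succ, add_mul, add_comm]

theorem coeff_ascPochhammer (S : Type*) [Semiring S] :
    ∀ n k, (ascPochhammer S n).coeff k = Nat.stirlingFirst n k
  | 0, k => by cases k <;> simp [coeff_one]
  | n + 1, 0 => by
    rw [coeff_zero_eq_eval_zero, ascPochhammer_ne_zero_eval_zero S n.succ_ne_zero]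
    simp
  | n + 1, k + 1 => by
    rw [ascPochhammer_succ_right, mul_add, coeff_add, coeff_mul_X, ← C_eq_natCast, coeff_mul_C,
      coeff_ascPochhammer S n k, coeff_ascPochhammer S n (k + 1), Nat.stirlingFirst_succ_succ,
      Nat.cast_add, Nat.cast_mul, Nat.cast_comm, add_comm]

theorem ascPochhammer_eq_sum_stirlingFirst_mul_X_pow (S : Type*) [Semiring S] (n : ℕ) :
    ascPochhammer S n = ∑ k ∈ range (n + 1), (Nat.stirlingFirst n k : S[X]) * X ^ k := by
  ext i
  simp only [coeff_ascPochhammer, finsetSum_coeff, ← C_eq_natCast, coeff_C_mul_X_pow,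
    sum_ite_eq, mem_range]
  split_ifs with hi
  · rfl
  · rw [Nat.stirlingFirst_eq_zero_of_lt (by omega), Nat.cast_zero]

theorem ascFactorial_add_eq_sum_descFactorial (m c n : ℕ) :
    (m + c).ascFactorial n =
      ∑ k ∈ range (n + 1),
        n.factorial / k.factorial * (n + c - 1).choose (n - k) * m.descFactorial k := by
  have hasc : (m + c).ascFactorial n = n.factorial * (m + (n + c - 1)).choose n := by
    rw [Nat.ascFactorial_eq_factorial_mul_choose']
    rcases n.eq_zero_or_pos with rfl | hn
    · simp
    · congr 2; omega
  rw [hasc, Nat.add_choose_eq,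
    Nat.sum_antidiagonal_eq_sum_range_succ (fun i j => m.choose i * (n + c - 1).choose j), mul_sum]
  refine sum_congr rfl fun k hk => ?_
  have hdvd : k.factorial ∣ n.factorial := Nat.factorial_dvd_factorial (mem_range_succ_iff.1 hk)
  rw [Nat.descFactorial_eq_factorial_mul_choose]
  conv_lhs => rw [← Nat.div_mul_cancel hdvd]
  ring

theorem ascPochhammer_comp_X_add_natCast (R : Type*) [CommRing R] [IsDomain R] [CharZero R]
    (c n : ℕ) :
    (ascPochhammer R n).comp (X + (c : R[X])) =
      ∑ k ∈ range (n + 1),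
        ((n.factorial / k.factorial * (n + c - 1).choose (n - k) : ℕ) : R[X]) *
          descPochhammer R k := by
  refine eq_of_infinite_eval_eq _ _
    (Set.infinite_of_injective_forall_mem (Nat.cast_injective (R := R)) fun m => ?_)
  simp only [Set.mem_ofPred_eq, eval_comp, eval_add, eval_X, eval_natCast, eval_finsetSum,
    eval_mul, ← Nat.cast_add, ← Nat.cast_ascFactorial, descPochhammer_eval_eq_descFactorial,
    ascFactorial_add_eq_sum_descFactorial]
  push_cast
  rfl

def bellFunctional : ℤ[X] →ₗ[ℤ] ℤ := lsum fun j => (bell j : ℤ) • LinearMap.id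

theorem bellFunctional_X_pow (j : ℕ) : bellFunctional (X ^ j) = bell j := by
  simp [bellFunctional, ← monomial_one_right_eq_X_pow, sum_monomial_index]

theorem bellFunctional_natCast_mul (c : ℕ) (p : ℤ[X]) :
    bellFunctional (c * p) = c * bellFunctional p := by
  rw [← nsmul_eq_mul, map_nsmul, nsmul_eq_mul]

theorem bellFunctional_descPochhammer (n : ℕ) : bellFunctional (descPochhammer ℤ n) = 1 := by
  induction n using Nat.strong_induction_on with
  | _ n ih =>
    have h := congrArg bellFunctional (X_pow_eq_sum_stirlingSecond_mul_descPochhammer ℤ n)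
    rw [sum_range_succ, Nat.stirlingSecond_self] at h
    simp only [bellFunctional_X_pow, map_add, map_sum, bellFunctional_natCast_mul, Nat.cast_one,
      one_mul] at h
    rw [sum_congr rfl fun k hk => by rw [ih k (mem_range.1 hk), mul_one]] at h
    have hbell : (bell n : ℤ) = ∑ k ∈ range n, (Nat.stirlingSecond n k : ℤ) + 1 := by
      simp [bell, stirling2_eq_stirlingSecond, sum_range_succ, Nat.stirlingSecond_self]
    linarith

theorem bellFunctional_X_add_natCast_pow (c n : ℕ) :
    bellFunctional ((X + (c : ℤ[X])) ^ n) = bellExt n c := by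
  rw [add_pow, map_sum, bellExt, Nat.cast_sum]
  refine sum_congr rfl fun m _ => ?_
  rw [show (X : ℤ[X]) ^ m * (c : ℤ[X]) ^ (n - m) * (n.choose m : ℤ[X]) =
      ((n.choose m * c ^ (n - m) : ℕ) : ℤ[X]) * X ^ m by push_cast; ring,
    bellFunctional_natCast_mul, bellFunctional_X_pow]
  push_cast
  rfl

/-- `B^L_{n,r} = Σ_{k=0}^n (-1)^{n-k} s(n,k) B_{k,2r}`, with `s(n,k)` the signed Stirling
numbers of the first kind and `B_{k,2r}` the `2r`-extended Bell numbers. -/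
theorem lahBellExt_eq_sum_stirling1_bellExt (n r : ℕ) :
    (lahBellExt n r : ℤ) =
      ∑ k ∈ Finset.range (n + 1),
        (-1) ^ (n - k) * stirling1 n k * (bellExt k (2 * r) : ℤ) := by
  have hLah : bellFunctional ((ascPochhammer ℤ n).comp (X + ((2 * r : ℕ) : ℤ[X]))) =
      lahBellExt n r := by
    rw [ascPochhammer_comp_X_add_natCast, map_sum, lahBellExt, Nat.cast_sum]
    refine sum_congr rfl fun k hk => ?_
    rw [bellFunctional_natCast_mul, bellFunctional_descPochhammer, mul_one, rLah,
      if_pos (mem_range_succ_iff.1 hk)]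
  have hStirling : bellFunctional ((ascPochhammer ℤ n).comp (X + ((2 * r : ℕ) : ℤ[X]))) =
      ∑ k ∈ range (n + 1), (Nat.stirlingFirst n k : ℤ) * bellExt k (2 * r) := by
    simp only [ascPochhammer_eq_sum_stirlingFirst_mul_X_pow, Polynomial.sum_comp, mul_comp,
      natCast_comp, X_pow_comp, map_sum, bellFunctional_natCast_mul,
      bellFunctional_X_add_natCast_pow]
  rw [← hLah, hStirling]
  refine sum_congr rfl fun k hk => ?_
  have hkn := mem_range_succ_iff.1 hk
  rw [stirling1_eq_neg_one_pow_mul_stirlingFirst, ← mul_assoc, ← pow_add,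
    Even.neg_one_pow ⟨n, by omega⟩, one_mul]
end

section
/- For nonnegative integers n, k, r with n ≥ k, L_r(n,k) = Σ_{m=k}^{n} (-1)^{n-m} S_2(m,k|2r) s(n,m), where S_2(m,k|x) = Σ_{j} C(m,j) x^{m-j} S_2(j,k) is the Stirling polynomial of the second kind evaluated at x = 2r, and s(n,m) are the signed Stirling numbers of the first kind. -/
open Finset

/-- Unsigned Stirling numbers of the first kind. -/
def stirlingC : ℕ → ℕ → ℕ
  | 0, 0 => 1
  | 0, _ + 1 => 0
  | _ + 1, 0 => 0
  | n + 1, k + 1 => n * stirlingC n (k + 1) + stirlingC n k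

lemma stirling2_eq_zero : ∀ j k, j < k → stirling2 j k = 0
  | 0, _ + 1, _ => rfl
  | j + 1, k + 1, h => by
    show (k + 1) * stirling2 j (k + 1) + stirling2 j k = 0
    rw [stirling2_eq_zero j (k + 1) (by omega), stirling2_eq_zero j k (by omega)]
    simp

lemma stirlingC_eq_zero : ∀ n m, n < m → stirlingC n m = 0
  | 0, _ + 1, _ => rfl
  | n + 1, m + 1, h => by
    show n * stirlingC n (m + 1) + stirlingC n m = 0
    rw [stirlingC_eq_zero n (m + 1) (by omega), stirlingC_eq_zero n m (by omega)]
    simp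

/-- Range-based Stirling polynomial. -/
def S2P (x m k : ℕ) : ℕ := ∑ j ∈ range (m + 1), m.choose j * x ^ (m - j) * stirling2 j k

lemma S2P_zero_left (x k : ℕ) : S2P x 0 k = stirling2 0 k := by
  simp [S2P]

lemma S2P_zero (x m : ℕ) : S2P x m 0 = x ^ m := by
  rw [S2P, Finset.sum_eq_single_of_mem 0 (by simp)]
  · simp [stirling2]
  · intro j hj hj0
    obtain ⟨j, rfl⟩ := Nat.exists_eq_succ_of_ne_zero hj0
    show _ * _ * stirling2 (j + 1) 0 = 0
    rw [show stirling2 (j + 1) 0 = 0 from rfl]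
    simp

lemma S2P_eq_zero_of_lt (x m k : ℕ) (h : m < k) : S2P x m k = 0 := by
  rw [S2P]
  apply Finset.sum_eq_zero
  intro j hj
  rw [stirling2_eq_zero j k (by simp at hj; omega)]
  simp

lemma shift_sum (x m k : ℕ) :
    ∑ j ∈ range (m + 1), m.choose (j + 1) * x ^ (m - j) * stirling2 (j + 1) (k + 1)
      = x * S2P x m (k + 1) := by
  have h : ∀ j ∈ range (m + 1), m.choose j * x ^ (m + 1 - j) * stirling2 j (k + 1)
      = x * (m.choose j * x ^ (m - j) * stirling2 j (k + 1)) := by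
    intro j hj
    simp only [mem_range] at hj
    rw [show m + 1 - j = (m - j) + 1 by omega, pow_succ']
    ring
  have key : ∑ j ∈ range (m + 2), m.choose j * x ^ (m + 1 - j) * stirling2 j (k + 1)
      = ∑ j ∈ range (m + 1), m.choose (j + 1) * x ^ (m - j) * stirling2 (j + 1) (k + 1) := by
    rw [Finset.sum_range_succ' (fun j => m.choose j * x ^ (m + 1 - j) * stirling2 j (k + 1)) (m + 1)]
    rw [show stirling2 0 (k + 1) = 0 from rfl]
    simp [Nat.succ_sub_succ]
  rw [← key, Finset.sum_range_succ, Nat.choose_succ_self]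
  simp only [zero_mul, add_zero]
  rw [Finset.sum_congr rfl h, ← Finset.mul_sum, S2P]

lemma S2P_succ (x m k : ℕ) :
    S2P x (m + 1) (k + 1) = (x + (k + 1)) * S2P x m (k + 1) + S2P x m k := by
  rw [S2P, Finset.sum_range_succ' _ (m + 1)]
  rw [show stirling2 0 (k + 1) = 0 from rfl]
  simp only [mul_zero, add_zero]
  have h : ∀ j ∈ range (m + 1),
      (m + 1).choose (j + 1) * x ^ (m + 1 - (j + 1)) * stirling2 (j + 1) (k + 1)
      = ((k + 1) * (m.choose j * x ^ (m - j) * stirling2 j (k + 1))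
          + m.choose j * x ^ (m - j) * stirling2 j k)
        + m.choose (j + 1) * x ^ (m - j) * stirling2 (j + 1) (k + 1) := by
    intro j hj
    rw [Nat.choose_succ_succ, Nat.succ_sub_succ]
    rw [show stirling2 (j + 1) (k + 1) = (k + 1) * stirling2 j (k + 1) + stirling2 j k from rfl]
    ring
  rw [Finset.sum_congr rfl h, Finset.sum_add_distrib, Finset.sum_add_distrib, shift_sum]
  rw [← Finset.mul_sum]
  show (k + 1) * S2P x m (k + 1) + S2P x m k + x * S2P x m (k + 1) = _
  ring

/-- Closed form of the r-Lah numbers without division. -/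
def F (x n k : ℕ) : ℕ := n.choose k * (n + x - 1).descFactorial (n - k)

/-- The candidate sum. -/
def T (x n k : ℕ) : ℕ := ∑ m ∈ range (n + 1), stirlingC n m * S2P x m k

lemma F_succ (x n k : ℕ) :
    F x (n + 1) (k + 1) = (n + x + (k + 1)) * F x n (k + 1) + F x n k := by
  rcases lt_trichotomy k n with h | rfl | h
  · unfold F
    have hb : n + 1 + x - 1 = (n + x - 1) + 1 := by omega
    have hnk : n + 1 - (k + 1) = (n - (k + 1)) + 1 := by omega
    rw [hb, hnk, Nat.succ_descFactorial_succ]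
    have hd : n - k = (n - (k + 1)) + 1 := by omega
    rw [hd, Nat.descFactorial_succ]
    have hsub : n + x - 1 - (n - (k + 1)) = x + k := by omega
    rw [hsub]
    have hq := Nat.choose_succ_right_eq n k
    rw [Nat.choose_succ_succ]
    zify [h.le] at hq ⊢
    have hb1 : (↑(n + x - 1) : ℤ) + 1 = n + x := by
      have h1 : 1 ≤ n + x := by omega
      push_cast [Nat.sub_add_cancel h1]
      omega
    linear_combination ((n.choose k : ℤ) + n.choose (k + 1)) *
        (((n + x - 1).descFactorial (n - (k + 1)) : ℤ)) * hb1 -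
      (((n + x - 1).descFactorial (n - (k + 1)) : ℤ)) * hq
  · unfold F
    simp [Nat.choose_succ_self, Nat.choose_self, Nat.sub_self]
  · unfold F
    rw [Nat.choose_eq_zero_of_lt (by omega), Nat.choose_eq_zero_of_lt (by omega),
      Nat.choose_eq_zero_of_lt (by omega)]
    simp

lemma F_zero_succ (x n : ℕ) : F x (n + 1) 0 = (n + x) * F x n 0 := by
  unfold F
  rcases Nat.eq_zero_or_pos (n + x) with h | h
  · have hn : n = 0 := by omega
    have hx : x = 0 := by omega
    subst hn; subst hx
    simp
  · have hb : n + 1 + x - 1 = (n + x - 1) + 1 := by omega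
    rw [hb, Nat.choose_zero_right, Nat.choose_zero_right, Nat.sub_zero, Nat.sub_zero,
      Nat.succ_descFactorial_succ]
    have : n + x - 1 + 1 = n + x := by omega
    rw [this]
    ring

lemma T_shift (x n k : ℕ) :
    ∑ m ∈ range (n + 1), stirlingC n (m + 1) * S2P x (m + 1) (k + 1) = T x n (k + 1) := by
  have key := Finset.sum_range_succ' (fun m => stirlingC n m * S2P x m (k + 1)) (n + 1)
  rw [S2P_zero_left, show stirling2 0 (k + 1) = 0 from rfl, mul_zero, add_zero] at key
  rw [Finset.sum_range_succ, stirlingC_eq_zero n (n + 1) (by omega), zero_mul, add_zero] at key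
  rw [← key, T]

lemma T_succ (x n k : ℕ) :
    T x (n + 1) (k + 1) = (n + x + (k + 1)) * T x n (k + 1) + T x n k := by
  rw [T, Finset.sum_range_succ' _ (n + 1), show stirlingC (n + 1) 0 = 0 from rfl, zero_mul,
    add_zero]
  have h : ∀ m ∈ range (n + 1),
      stirlingC (n + 1) (m + 1) * S2P x (m + 1) (k + 1)
      = n * (stirlingC n (m + 1) * S2P x (m + 1) (k + 1))
        + ((x + (k + 1)) * (stirlingC n m * S2P x m (k + 1)) + stirlingC n m * S2P x m k) := by
    intro m hm
    rw [show stirlingC (n + 1) (m + 1) = n * stirlingC n (m + 1) + stirlingC n m from rfl,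
      add_mul, S2P_succ]
    ring
  rw [Finset.sum_congr rfl h, Finset.sum_add_distrib, Finset.sum_add_distrib, ← Finset.mul_sum,
    ← Finset.mul_sum, T_shift]
  show n * T x n (k + 1) + ((x + (k + 1)) * T x n (k + 1) + T x n k) = _
  ring

lemma T_zero_succ (x n : ℕ) : T x (n + 1) 0 = (n + x) * T x n 0 := by
  cases n with
  | zero =>
    simp only [T]
    rw [show (0:ℕ) + 1 + 1 = 2 from rfl]
    rw [Finset.sum_range_succ, Finset.sum_range_succ, Finset.sum_range_zero,
      Finset.sum_range_succ, Finset.sum_range_zero]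
    rw [show stirlingC 1 0 = 0 from rfl, show stirlingC 1 1 = 1 from by rfl,
      show stirlingC 0 0 = 1 from rfl, S2P_zero, S2P_zero]
    ring
  | succ n =>
    rw [T, Finset.sum_range_succ' _ (n + 1 + 1), show stirlingC (n + 1 + 1) 0 = 0 from rfl,
      zero_mul, add_zero]
    have h : ∀ m ∈ range (n + 1 + 1),
        stirlingC (n + 1 + 1) (m + 1) * S2P x (m + 1) 0
        = (n + 1) * (stirlingC (n + 1) (m + 1) * S2P x (m + 1) 0)
          + x * (stirlingC (n + 1) m * S2P x m 0) := by
      intro m hm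
      rw [show stirlingC (n + 1 + 1) (m + 1)
          = (n + 1) * stirlingC (n + 1) (m + 1) + stirlingC (n + 1) m from rfl]
      rw [S2P_zero, S2P_zero, pow_succ]
      ring
    rw [Finset.sum_congr rfl h, Finset.sum_add_distrib, ← Finset.mul_sum, ← Finset.mul_sum]
    have key := Finset.sum_range_succ' (fun m => stirlingC (n + 1) m * S2P x m 0) (n + 1 + 1)
    rw [show stirlingC (n + 1) 0 * S2P x 0 0 = 0 from by
        rw [show stirlingC (n + 1) 0 = 0 from rfl]; simp, add_zero] at key
    rw [Finset.sum_range_succ, stirlingC_eq_zero (n + 1) (n + 1 + 1) (by omega), zero_mul,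
      add_zero] at key
    rw [← key]
    show (n + 1) * T x (n + 1) 0 + x * T x (n + 1) 0 = _
    ring

lemma F_eq_T (x : ℕ) : ∀ n k, F x n k = T x n k := by
  intro n
  induction n with
  | zero =>
    intro k
    cases k with
    | zero => simp [F, T, S2P_zero_left, stirlingC, stirling2]
    | succ k =>
      rw [T, Finset.sum_range_one, S2P_zero_left,
        show stirling2 0 (k + 1) = 0 from rfl, mul_zero, F,
        Nat.choose_eq_zero_of_lt (by omega), zero_mul]
  | succ n ih =>
    intro k
    cases k with
    | zero => rw [F_zero_succ, T_zero_succ, ih]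
    | succ k => rw [F_succ, T_succ, ih, ih]

lemma rLah_eq_F (r n k : ℕ) : rLah r n k = F (2 * r) n k := by
  unfold rLah F
  split
  · rename_i h
    have h1 : n.factorial / k.factorial = n.choose k * (n - k).factorial := by
      refine Nat.div_eq_of_eq_mul_left k.factorial_pos ?_
      rw [← Nat.choose_mul_factorial_mul_factorial h]
      ring
    rw [h1, Nat.descFactorial_eq_factorial_mul_choose]
    ring
  · rename_i h
    rw [Nat.choose_eq_zero_of_lt (by omega), zero_mul]

lemma stirling2Poly_eq_S2P (m k x : ℕ) : stirling2Poly m k x = S2P x m k := by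
  rw [stirling2Poly, S2P]
  refine Finset.sum_subset ?_ ?_
  · intro j hj
    simp only [mem_Icc] at hj
    simp only [mem_range]
    omega
  · intro j hj hj'
    simp only [mem_range] at hj
    simp only [mem_Icc] at hj'
    rw [stirling2_eq_zero j k (by omega)]
    simp

lemma sum_Icc_eq_T (x n k : ℕ) :
    ∑ m ∈ Finset.Icc k n, stirling2Poly m k x * stirlingC n m = T x n k := by
  rw [T]
  have h : ∀ m ∈ Finset.Icc k n, stirling2Poly m k x * stirlingC n m
      = stirlingC n m * S2P x m k := by
    intro m hm
    rw [stirling2Poly_eq_S2P, mul_comm]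
  rw [Finset.sum_congr rfl h]
  refine Finset.sum_subset ?_ ?_
  · intro m hm
    simp only [mem_Icc] at hm
    simp only [mem_range]
    omega
  · intro m hm hm'
    simp only [mem_range] at hm
    simp only [mem_Icc] at hm'
    rw [S2P_eq_zero_of_lt x m k (by omega)]
    simp

lemma stirling1_eq : ∀ n m, stirling1 n m = (-1 : ℤ) ^ (n - m) * (stirlingC n m : ℤ)
  | 0, 0 => by simp [stirling1, stirlingC]
  | 0, m + 1 => by
    rw [show stirling1 0 (m + 1) = 0 from rfl, show stirlingC 0 (m + 1) = 0 from rfl]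
    simp
  | n + 1, 0 => by
    rw [show stirling1 (n + 1) 0 = 0 from rfl, show stirlingC (n + 1) 0 = 0 from rfl]
    simp
  | n + 1, m + 1 => by
    have h1 := stirling1_eq n m
    have h2 := stirling1_eq n (m + 1)
    rw [show stirling1 (n + 1) (m + 1) = stirling1 n m - (n : ℤ) * stirling1 n (m + 1) from rfl,
      show stirlingC (n + 1) (m + 1) = n * stirlingC n (m + 1) + stirlingC n m from rfl,
      h1, h2]
    rcases lt_trichotomy m n with h | rfl | h
    · rw [show n - m = (n - (m + 1)) + 1 by omega,
        show n + 1 - (m + 1) = (n - (m + 1)) + 1 by omega]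
      push_cast
      ring
    · rw [stirlingC_eq_zero m (m + 1) (by omega)]
      simp
    · rw [stirlingC_eq_zero n m (by omega), stirlingC_eq_zero n (m + 1) (by omega)]
      simp

/-- `L_r(n,k) = Σ_{m=k}^n (-1)^{n-m} S₂(m,k|2r) s(n,m)`. -/
theorem rLah_eq_sum_stirling2Poly_stirling1 (n k r : ℕ) (hkn : k ≤ n) :
    (rLah r n k : ℤ) =
      ∑ m ∈ Finset.Icc k n,
        (-1) ^ (n - m) * (stirling2Poly m k (2 * r) : ℤ) * stirling1 n m := by
  have key : rLah r n k = ∑ m ∈ Finset.Icc k n, stirling2Poly m k (2 * r) * stirlingC n m := by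
    rw [sum_Icc_eq_T, rLah_eq_F, F_eq_T]
  rw [key]
  push_cast
  refine Finset.sum_congr rfl fun m hm => ?_
  rw [stirling1_eq n m]
  have h1 : ((-1 : ℤ)) ^ (n - m) * (-1) ^ (n - m) = 1 := by
    rw [← pow_add]
    exact Even.neg_one_pow ⟨n - m, rfl⟩
  linear_combination ((stirling2Poly m k (2 * r) : ℤ) * (stirlingC n m : ℤ)) * h1.symm
end

section
/- For nonnegative integers n, k, r with n ≥ k, S_2(n,k|2r) = Σ_{m=k}^{n} (-1)^{n-m} S_2(n,m) L_r(m,k), where S_2(n,k|x) = Σ_{j=k}^{n} C(n,j) x^{n-j} S_2(j,k) is the Stirling polynomial of the second kind. -/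
open Finset

/-! Both sides satisfy the recurrence `T(n+1,0) = x T(n,0)`,
`T(n+1,k+1) = T(n,k) + (x+k+1) T(n,k+1)` with `x = 2r` (that of the `r`-Stirling numbers
`S_x(n+x,k+x)`), and agree at `n = 0`. On the left this is Pascal's rule combined with the
Stirling recurrence. On the right, the Stirling recurrence makes the alternating transform
`T f n = Σ_m (-1)^(n-m) S₂(n,m) f m` satisfy `T f (n+1) = T (f ∘ succ) n - T (m ↦ m f m) n`,
and the `r`-Lah recurrence `L(m+1,k) = L(m,k-1) + (m+k+2r) L(m,k)` turns this into the same
recurrence. -/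

open Nat

theorem stirling2_eq_stirlingSecond_s9 : stirling2 = stirlingSecond := by
  funext n k
  induction n generalizing k with
  | zero => cases k <;> rfl
  | succ n ih => cases k <;> simp [stirling2, stirlingSecond, ih]

theorem rLah_eq_zero_of_lt (r : ℕ) {n k : ℕ} (h : n < k) : rLah r n k = 0 := by
  rw [rLah, if_neg (by omega)]

theorem rLah_eq_descFactorial_mul_choose (r : ℕ) {n k : ℕ} (h : k ≤ n) :
    rLah r n k = n.descFactorial (n - k) * (n + 2 * r - 1).choose (n - k) := by
  rw [rLah, if_pos h, descFactorial_eq_div (sub_le n k), Nat.sub_sub_self h]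

theorem rLah_self (r n : ℕ) : rLah r n n = 1 := by
  simp [rLah_eq_descFactorial_mul_choose r le_rfl]

theorem rLah_succ_zero (r n : ℕ) : rLah r (n + 1) 0 = (n + 2 * r) * rLah r n 0 := by
  simp only [rLah_eq_descFactorial_mul_choose r (zero_le _), Nat.sub_zero, descFactorial_self]
  rcases Nat.eq_zero_or_pos (n + 2 * r) with h | h
  · obtain ⟨rfl, rfl⟩ : n = 0 ∧ r = 0 := by omega
    rfl
  · obtain ⟨N, hN⟩ : ∃ N, n + 2 * r = N + 1 := ⟨n + 2 * r - 1, by omega⟩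
    rw [show n + 1 + 2 * r - 1 = N + 1 by omega, show n + 2 * r - 1 = N by omega, hN,
      factorial_succ]
    linear_combination n.factorial * (add_one_mul_choose_eq N n).symm

theorem rLah_succ_succ (r n k : ℕ) :
    rLah r (n + 1) (k + 1) = rLah r n k + (n + k + 1 + 2 * r) * rLah r n (k + 1) := by
  rcases lt_trichotomy n k with h | rfl | h
  · simp [rLah_eq_zero_of_lt r h, rLah_eq_zero_of_lt r (Nat.lt_succ_of_lt h),
      rLah_eq_zero_of_lt r (show n + 1 < k + 1 by omega)]
  · simp [rLah_self, rLah_eq_zero_of_lt r (lt_succ_self n)]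
  obtain ⟨j, rfl⟩ := Nat.exists_eq_add_of_lt h
  simp only [rLah_eq_descFactorial_mul_choose r (show k + 1 ≤ k + j + 1 + 1 by omega),
    rLah_eq_descFactorial_mul_choose r (show k ≤ k + j + 1 by omega),
    rLah_eq_descFactorial_mul_choose r (show k + 1 ≤ k + j + 1 by omega),
    show k + j + 1 + 1 - (k + 1) = j + 1 by omega, show k + j + 1 - k = j + 1 by omega,
    show k + j + 1 - (k + 1) = j by omega,
    show k + j + 1 + 1 + 2 * r - 1 = k + j + 2 * r + 1 by omega,
    show k + j + 1 + 2 * r - 1 = k + j + 2 * r by omega, choose_succ_succ]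
  rw [succ_descFactorial_succ, descFactorial_succ, show k + j + 1 - j = k + 1 by omega]
  have pascal := choose_succ_right_eq (k + j + 2 * r) j
  rw [show k + j + 2 * r - j = k + 2 * r by omega] at pascal
  linear_combination (k + j + 1).descFactorial j * pascal

theorem stirling2Poly_eq_sum_range (n k x : ℕ) :
    stirling2Poly n k x =
      ∑ j ∈ range (n + 1), n.choose j * x ^ (n - j) * stirlingSecond j k := by
  rw [stirling2Poly, stirling2_eq_stirlingSecond_s9]
  refine sum_subset (fun j hj => by simp only [mem_Icc, mem_range] at hj ⊢; omega)
    fun j _ hj => ?_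
  rw [stirlingSecond_eq_zero_of_lt (by simp_all), mul_zero]

theorem stirling2Poly_succ (n k x : ℕ) :
    stirling2Poly (n + 1) k x = x * stirling2Poly n k x +
      ∑ j ∈ range (n + 1), n.choose j * x ^ (n - j) * stirlingSecond (j + 1) k := by
  have pascal := sum_choose_succ_mul (fun j i => x ^ i * stirlingSecond j k) n
  simp only [Nat.cast_id] at pascal
  simp only [stirling2Poly_eq_sum_range, mul_assoc, pascal, mul_sum]
  congr 1
  refine sum_congr rfl fun j hj => ?_
  rw [show n + 1 - j = n - j + 1 by simp only [mem_range] at hj; omega, pow_succ]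
  ring

theorem stirling2Poly_succ_zero (n x : ℕ) :
    stirling2Poly (n + 1) 0 x = x * stirling2Poly n 0 x := by
  simp [stirling2Poly_succ]

theorem stirling2Poly_succ_succ (n k x : ℕ) :
    stirling2Poly (n + 1) (k + 1) x =
      stirling2Poly n k x + (x + (k + 1)) * stirling2Poly n (k + 1) x := by
  simp only [stirling2Poly_succ, stirlingSecond_succ_succ, stirling2Poly_eq_sum_range, mul_sum,
    ← sum_add_distrib, add_mul, mul_add]
  refine sum_congr rfl fun j _ => ?_
  ring

/-- The sign is written `(-1) ^ (n + m)` rather than `(-1) ^ (n - m)` to avoid truncated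
subtraction; the two agree on the support `m ≤ n`. -/
def stirling2Transform (f : ℕ → ℤ) (n : ℕ) : ℤ :=
  ∑ m ∈ range (n + 1), (-1) ^ (n + m) * (stirlingSecond n m : ℤ) * f m

theorem stirling2Transform_eq_sum_range (f : ℕ → ℤ) {n N : ℕ} (h : n < N) :
    stirling2Transform f n =
      ∑ m ∈ range N, (-1) ^ (n + m) * (stirlingSecond n m : ℤ) * f m := by
  refine sum_subset (fun m hm => by simp only [mem_range] at hm ⊢; omega) fun m _ hm => ?_
  rw [stirlingSecond_eq_zero_of_lt (by simpa using hm)]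
  simp

theorem stirling2Transform_zero (f : ℕ → ℤ) : stirling2Transform f 0 = f 0 := by
  simp [stirling2Transform]

theorem stirling2Transform_succ (f : ℕ → ℤ) (n : ℕ) :
    stirling2Transform f (n + 1) =
      stirling2Transform (fun m => f (m + 1)) n - stirling2Transform (fun m => m * f m) n := by
  rw [stirling2Transform_eq_sum_range (fun m => m * f m) (by omega : n < n + 1 + 1),
    sum_range_succ', stirling2Transform, sum_range_succ', stirling2Transform]
  simp only [stirlingSecond_succ_succ, stirlingSecond_succ_zero]
  push_cast
  simp only [zero_mul, mul_zero, add_zero, ← sum_sub_distrib]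
  refine sum_congr rfl fun m _ => ?_
  ring

theorem stirling2Transform_succ_of_succ_eq {a c : ℕ → ℤ} (s : ℤ)
    (h : ∀ m, c (m + 1) = a m + (m + s) * c m) (n : ℕ) :
    stirling2Transform c (n + 1) = stirling2Transform a n + s * stirling2Transform c n := by
  rw [stirling2Transform_succ]
  simp only [h, stirling2Transform, mul_sum, ← sum_add_distrib, ← sum_sub_distrib]
  refine sum_congr rfl fun m _ => ?_
  ring

theorem stirling2Poly_eq_stirling2Transform_rLah (r n k : ℕ) :
    (stirling2Poly n k (2 * r) : ℤ) = stirling2Transform (fun m => rLah r m k) n := by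
  induction n generalizing k with
  | zero => cases k <;> simp [stirling2Transform_zero, stirling2Poly, stirling2, rLah]
  | succ n ih =>
    cases k with
    | zero =>
      rw [stirling2Poly_succ_zero, stirling2Transform_succ_of_succ_eq (a := 0) (2 * r)
        (fun m => by push_cast [rLah_succ_zero, Pi.zero_apply]; ring)]
      push_cast
      simp [stirling2Transform, ih]
    | succ k =>
      rw [stirling2Poly_succ_succ, stirling2Transform_succ_of_succ_eq (k + 1 + 2 * r)
        (fun m => by push_cast [rLah_succ_succ]; ring)]
      push_cast
      rw [ih, ih]
      ring

theorem stirling2Poly_eq_sum_stirling2_rLah_general (n k r : ℕ) :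
    (stirling2Poly n k (2 * r) : ℤ) =
      ∑ m ∈ Finset.Icc k n,
        (-1) ^ (n - m) * (stirling2 n m : ℤ) * (rLah r m k : ℤ) := by
  rw [stirling2Poly_eq_stirling2Transform_rLah, stirling2Transform, stirling2_eq_stirlingSecond_s9]
  symm
  refine sum_subset_zero_on_sdiff (fun m hm => by simp only [mem_Icc, mem_range] at hm ⊢; omega)
    (fun m hm => ?_) (fun m hm => ?_)
  · simp only [mem_sdiff, mem_range, mem_Icc] at hm
    rw [rLah_eq_zero_of_lt r (by omega), Nat.cast_zero, mul_zero]
  · simp only [mem_Icc] at hm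
    rw [show n + m = n - m + 2 * m by omega, pow_add, pow_mul, neg_one_sq, one_pow, mul_one]

/-- `S₂(n,k|2r) = Σ_{m=k}^n (-1)^{n-m} S₂(n,m) L_r(m,k)`. -/
theorem stirling2Poly_eq_sum_stirling2_rLah (n k r : ℕ) (hkn : k ≤ n) :
    (stirling2Poly n k (2 * r) : ℤ) =
      ∑ m ∈ Finset.Icc k n,
        (-1) ^ (n - m) * (stirling2 n m : ℤ) * (rLah r m k : ℤ) :=
  stirling2Poly_eq_sum_stirling2_rLah_general n k r
end

section
/- For positive integers m, k and nonnegative integers n, r with n ≥ m+k, the r-Lah numbers satisfy the convolution identity C(m+k, m) * L_{2r}(n, m+k) = Σ_{l=m}^{n-k} C(n, l) L_r(l, m) L_r(n-l, k). -/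
open Finset

open Nat

/-!
Clearing denominators, `k! L_r(n,k) = n! · multichoose (k + 2r) (n - k)`: the binomial
`C(n+2r-1, n-k)` is the multiset coefficient `((k+2r, n-k))`, a form which also sidesteps the
truncated `- 1`. Multiplying the identity by `m! k!` and using `C(m+k,m) m! k! = (m+k)!` and
`C(n,l) l! (n-l)! = n!`, it becomes Vandermonde's convolution for multiset coefficients,
`((a+b, N)) = Σ_{i+j=N} ((a, i)) ((b, j))`, with `a = m+2r`, `b = k+2r`, `N = n-m-k`.
-/

/-- Chu–Vandermonde at `-a` and `-b`, since `choose (-a) i = (-1)^i • multichoose a i`. -/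
theorem Nat.multichoose_add (a b n : ℕ) :
    (a + b).multichoose n = ∑ ij ∈ antidiagonal n, a.multichoose ij.1 * b.multichoose ij.2 := by
  have cast_multichoose (c i : ℕ) : Ring.multichoose (c : ℤ) i = c.multichoose i := by
    rw [Nat.multichoose_eq]; rfl
  have h := Ring.add_choose_eq (r := -(a : ℤ)) (s := -(b : ℤ)) n (Commute.all _ _)
  rw [← neg_add, Ring.choose_neg'] at h
  simp only [Ring.choose_neg', smul_mul_smul_comm] at h
  rw [sum_congr rfl fun ij hij => by
    rw [← Int.negOnePow_add, ← Nat.cast_add, mem_antidiagonal.mp hij], ← smul_sum,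
    smul_left_cancel_iff, ← Nat.cast_add] at h
  simp only [cast_multichoose] at h
  exact_mod_cast h

theorem Finset.sum_Icc_eq_sum_antidiagonal {M : Type*} [AddCommMonoid M] (f : ℕ → ℕ → M)
    {a b : ℕ} (h : a ≤ b) :
    ∑ l ∈ Icc a b, f (l - a) (b - l) = ∑ ij ∈ antidiagonal (b - a), f ij.1 ij.2 := by
  refine sum_nbij' (fun l => (l - a, b - l)) (fun ij => a + ij.1) ?_ ?_ ?_ ?_ fun _ _ => rfl <;>
    intro x hx <;>
    simp only [mem_Icc, HasAntidiagonal.mem_antidiagonal, Prod.ext_iff] at hx ⊢ <;> omega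

theorem factorial_mul_rLah {r n k : ℕ} (h : k ≤ n) :
    k ! * rLah r n k = n ! * (k + 2 * r).multichoose (n - k) := by
  rw [rLah, if_pos h, Nat.multichoose_eq, ← mul_assoc,
    Nat.mul_div_cancel' (factorial_dvd_factorial h)]
  congr 2
  omega

theorem rLah_convolution_general (m k n r : ℕ) (hn : m + k ≤ n) :
    Nat.choose (m + k) m * rLah (2 * r) n (m + k) =
      ∑ l ∈ Finset.Icc m (n - k), Nat.choose n l * rLah r l m * rLah r (n - l) k := by
  have term (l : ℕ) (hl : l ∈ Icc m (n - k)) :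
      m ! * k ! * (n.choose l * rLah r l m * rLah r (n - l) k) =
        n ! * ((m + 2 * r).multichoose (l - m) * (k + 2 * r).multichoose (n - k - l)) := by
    obtain ⟨hml, hlk⟩ := mem_Icc.mp hl
    calc m ! * k ! * (n.choose l * rLah r l m * rLah r (n - l) k)
        = n.choose l * (m ! * rLah r l m) * (k ! * rLah r (n - l) k) := by ring
      _ = n.choose l * l ! * (n - l) ! *
            ((m + 2 * r).multichoose (l - m) * (k + 2 * r).multichoose (n - l - k)) := by
        rw [factorial_mul_rLah hml, factorial_mul_rLah (by omega)]; ring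
      _ = _ := by rw [choose_mul_factorial_mul_factorial (by omega), Nat.sub_right_comm]
  apply Nat.eq_of_mul_eq_mul_left (mul_pos (factorial_pos m) (factorial_pos k))
  calc m ! * k ! * ((m + k).choose m * rLah (2 * r) n (m + k))
      = n ! * ((m + 2 * r) + (k + 2 * r)).multichoose (n - k - m) := by
        have hmk : m ! * k ! * (m + k).choose m = (m + k)! := by
          rw [choose_symm_add, ← add_choose_mul_factorial_mul_factorial]; ring
        rw [← mul_assoc, hmk, factorial_mul_rLah hn]
        congr 2 <;> omega
    _ = ∑ l ∈ Icc m (n - k), m ! * k ! * (n.choose l * rLah r l m * rLah r (n - l) k) := by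
      rw [sum_congr rfl term, ← mul_sum, Nat.multichoose_add,
        sum_Icc_eq_sum_antidiagonal
          (fun i j => (m + 2 * r).multichoose i * (k + 2 * r).multichoose j) (by omega)]
    _ = _ := (mul_sum ..).symm

/-- Convolution identity for the `r`-Lah numbers:
`C(m+k,m) L_{2r}(n,m+k) = Σ_{l=m}^{n-k} C(n,l) L_r(l,m) L_r(n-l,k)`. -/
theorem rLah_convolution (m k n r : ℕ) (hm : 1 ≤ m) (hk : 1 ≤ k) (hn : m + k ≤ n) :
    Nat.choose (m + k) m * rLah (2 * r) n (m + k) =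
      ∑ l ∈ Finset.Icc m (n - k), Nat.choose n l * rLah r l m * rLah r (n - l) k :=
  rLah_convolution_general m k n r hn
end

section
/- For positive integers m, k and n ≥ m+k, the ordinary Lah numbers satisfy C(m+k, m) * L(n, m+k) = Σ_{l=m}^{n-k} C(n,l) L(l, m) L(n-l, k). -/
open Finset

/-!
Multiplying by `m! k!` clears all denominators: since `k! L(n,k) = n! C(n-1,k-1)` and
`C(n,l) l! (n-l)! = n!`, both sides become `n!` times a binomial expression, and the identity
reduces to the upper-index Vandermonde identity
`Σ_l C(l-1,m-1) C(n-l-1,k-1) = C(n-1,m+k-1)`.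
-/

open Nat

theorem sum_antidiagonal_choose_mul_choose (s a b : ℕ) :
    ∑ ij ∈ antidiagonal s, ij.1.choose a * ij.2.choose b = (s + 1).choose (a + b + 1) := by
  induction s generalizing b with
  | zero => cases a <;> cases b <;> simp [choose_eq_zero_of_lt]
  | succ s ih =>
    rw [sum_antidiagonal_succ']
    cases b with
    | zero =>
      have h := ih 0
      simp only [choose_zero_right, mul_one, add_zero] at h ⊢
      rw [h, choose_succ_succ' (s + 1), add_comm]
    | succ b =>
      simp only [choose_zero_succ, mul_zero, zero_add, choose_succ_succ' _ b, mul_add,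
        sum_add_distrib, ih]
      rw [show a + (b + 1) + 1 = a + b + 1 + 1 by omega]
      exact (choose_succ_succ' _ _).symm

theorem sum_Icc_choose_mul_choose_sub (s a b : ℕ) :
    ∑ i ∈ Icc a (s - b), i.choose a * (s - i).choose b = (s + 1).choose (a + b + 1) := by
  rw [← sum_antidiagonal_choose_mul_choose, sum_antidiagonal_eq_sum_range_succ_mk]
  refine sum_subset (fun i hi => by simp only [mem_Icc, mem_range] at hi ⊢; omega) ?_
  intro i hi hi'
  simp only [mem_Icc, mem_range] at hi hi'
  by_cases hia : i < a
  · rw [choose_eq_zero_of_lt hia, zero_mul]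
  · rw [choose_eq_zero_of_lt (by omega : s - i < b), mul_zero]

theorem sum_Icc_choose_pred_mul_choose_pred {m k n : ℕ} (hm : 1 ≤ m) (hk : 1 ≤ k)
    (hn : m + k ≤ n) :
    ∑ l ∈ Icc m (n - k), (l - 1).choose (m - 1) * (n - l - 1).choose (k - 1) =
      (n - 1).choose (m + k - 1) := by
  obtain ⟨a, rfl⟩ : ∃ a, m = a + 1 := ⟨m - 1, by omega⟩
  obtain ⟨b, rfl⟩ : ∃ b, k = b + 1 := ⟨k - 1, by omega⟩
  obtain ⟨s, rfl⟩ : ∃ s, n = s + 2 := ⟨n - 2, by omega⟩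
  rw [show s + 2 - (b + 1) = s - b + 1 by omega, ← map_add_right_Icc, sum_map,
    show s + 2 - 1 = s + 1 by omega, show a + 1 + (b + 1) - 1 = a + b + 1 by omega,
    ← sum_Icc_choose_mul_choose_sub]
  refine sum_congr rfl fun i _ => ?_
  simp only [addRightEmbedding_apply, add_tsub_cancel_right,
    show s + 2 - (i + 1) - 1 = s - i by omega]

theorem factorial_mul_rLah_zero {n k : ℕ} (hk : 1 ≤ k) (hkn : k ≤ n) :
    k ! * rLah 0 n k = n ! * (n - 1).choose (k - 1) := by
  rw [rLah, if_pos hkn, ← mul_assoc, Nat.mul_div_cancel' (factorial_dvd_factorial hkn), mul_zero,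
    add_zero, ← choose_symm (by omega : k - 1 ≤ n - 1), show n - 1 - (k - 1) = n - k by omega]

/-- Convolution identity for the ordinary Lah numbers:
`C(m+k,m) L(n,m+k) = Σ_{l=m}^{n-k} C(n,l) L(l,m) L(n-l,k)`. -/
theorem lah_convolution (m k n : ℕ) (hm : 1 ≤ m) (hk : 1 ≤ k) (hn : m + k ≤ n) :
    Nat.choose (m + k) m * rLah 0 n (m + k) =
      ∑ l ∈ Finset.Icc m (n - k), Nat.choose n l * rLah 0 l m * rLah 0 (n - l) k := by
  refine Nat.eq_of_mul_eq_mul_left (by positivity : 0 < m ! * k !) ?_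
  calc m ! * k ! * ((m + k).choose m * rLah 0 n (m + k))
      = (m + k) ! * rLah 0 n (m + k) := by
        rw [← choose_mul_factorial_mul_factorial (le_add_right m k), add_tsub_cancel_left]; ring
    _ = n ! * ∑ l ∈ Icc m (n - k), (l - 1).choose (m - 1) * (n - l - 1).choose (k - 1) := by
        rw [factorial_mul_rLah_zero (by omega) hn, sum_Icc_choose_pred_mul_choose_pred hm hk hn]
    _ = ∑ l ∈ Icc m (n - k), n.choose l * (m ! * rLah 0 l m) * (k ! * rLah 0 (n - l) k) := by
        rw [mul_sum]
        refine sum_congr rfl fun l hl => ?_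
        obtain ⟨hml, hlk⟩ := mem_Icc.mp hl
        rw [factorial_mul_rLah_zero hm hml, factorial_mul_rLah_zero hk (by omega),
          ← choose_mul_factorial_mul_factorial (by omega : l ≤ n)]
        ring
    _ = m ! * k ! * ∑ l ∈ Icc m (n - k), n.choose l * rLah 0 l m * rLah 0 (n - l) k := by
        rw [mul_sum]
        exact sum_congr rfl fun _ _ => by ring
end

section
/- For all nonnegative integers n, r and real α, B^L_{n,r}(α) = Σ_{l=0}^{n} ( Σ_{k=l}^{n} L_r(n,k) s(k,l) ) B_l(α), where s(k,l) are the signed Stirling numbers of the first kind and B_l the Bell polynomials. -/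
open Finset

/-!
The Stirling numbers are orthogonal, `Σ_l s(k,l) S₂(l,j) = δ_{kj}`, so `x^k = Σ_l s(k,l) B_l(x)`.
Substituting this into `Σ_k a_k x^k` and exchanging the two sums gives the identity for an
arbitrary coefficient sequence `a_k`; the `r`-Lah numbers play no special role.
-/

theorem stirling1_eq_zero_of_lt : ∀ {n k : ℕ}, n < k → stirling1 n k = 0
  | 0, _ + 1, _ => rfl
  | n + 1, k + 1, h => by
    rw [stirling1, stirling1_eq_zero_of_lt (by omega), stirling1_eq_zero_of_lt (by omega)]
    ring

theorem stirling2_eq_zero_of_lt : ∀ {n k : ℕ}, n < k → stirling2 n k = 0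
  | 0, _ + 1, _ => rfl
  | n + 1, k + 1, h => by
    rw [stirling2, stirling2_eq_zero_of_lt (by omega), stirling2_eq_zero_of_lt (by omega), mul_zero]

theorem sum_stirling1_mul_stirling2 :
    ∀ k j : ℕ, ∑ l ∈ range (k + 1), stirling1 k l * (stirling2 l j : ℤ) = if k = j then 1 else 0
  | 0, j => by cases j <;> simp [stirling1, stirling2]
  | k + 1, 0 => by simp [sum_range_succ', stirling1, stirling2]
  | k + 1, j + 1 => by
    -- the index shift is free because `S₂(0, j + 1) = 0` and `s(k, k + 1) = 0`
    have shift : ∑ m ∈ range (k + 1), stirling1 k (m + 1) * (stirling2 (m + 1) (j + 1) : ℤ) =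
        ∑ l ∈ range (k + 1), stirling1 k l * (stirling2 l (j + 1) : ℤ) := by
      have h := sum_range_succ' (fun l ↦ stirling1 k l * (stirling2 l (j + 1) : ℤ)) (k + 1)
      rw [sum_range_succ, stirling1_eq_zero_of_lt (Nat.lt_succ_self k)] at h
      simpa [stirling2] using h.symm
    have recurrence : ∀ m ∈ range (k + 1),
        stirling1 (k + 1) (m + 1) * (stirling2 (m + 1) (j + 1) : ℤ) =
          (j + 1) * (stirling1 k m * stirling2 m (j + 1)) + stirling1 k m * stirling2 m j -
            k * (stirling1 k (m + 1) * stirling2 (m + 1) (j + 1)) := by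
      intro m _
      simp only [stirling1, stirling2]
      push_cast
      ring
    rw [sum_range_succ', sum_congr rfl recurrence, sum_sub_distrib, sum_add_distrib,
      ← mul_sum, ← mul_sum, shift, sum_stirling1_mul_stirling2 k j,
      sum_stirling1_mul_stirling2 k (j + 1)]
    simp only [stirling1, zero_mul, add_zero]
    -- `(j + 1) δ(k, j + 1) - k δ(k, j + 1) = 0`, leaving `δ(k, j)`
    split_ifs <;> omega

section CommRing

variable {R : Type*} [CommRing R]

def bellPoly (l : ℕ) (x : R) : R :=
  ∑ j ∈ range (l + 1), (stirling2 l j : R) * x ^ j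

theorem sum_stirling1_mul_bellPoly (k : ℕ) (x : R) :
    ∑ l ∈ range (k + 1), (stirling1 k l : R) * bellPoly l x = x ^ k := by
  have extend : ∀ l ∈ range (k + 1),
      bellPoly l x = ∑ j ∈ range (k + 1), (stirling2 l j : R) * x ^ j := by
    intro l hl
    refine sum_subset (range_subset_range.2 (by simpa using hl)) fun j _ hj ↦ ?_
    rw [stirling2_eq_zero_of_lt (by simpa using hj), Nat.cast_zero, zero_mul]
  calc ∑ l ∈ range (k + 1), (stirling1 k l : R) * bellPoly l x
      = ∑ j ∈ range (k + 1),
          ((∑ l ∈ range (k + 1), stirling1 k l * (stirling2 l j : ℤ) : ℤ) : R) * x ^ j := by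
        rw [sum_congr rfl fun l hl ↦ congrArg _ (extend l hl)]
        simp only [mul_sum, sum_mul, Int.cast_sum, Int.cast_mul, Int.cast_natCast, mul_assoc]
        exact sum_comm
    _ = x ^ k := by simp [sum_stirling1_mul_stirling2]

theorem sum_mul_pow_eq_sum_bellPoly (a : ℕ → R) (n : ℕ) (x : R) :
    ∑ k ∈ range (n + 1), a k * x ^ k =
      ∑ l ∈ range (n + 1), (∑ k ∈ Icc l n, a k * stirling1 k l) * bellPoly l x := by
  simp_rw [← sum_stirling1_mul_bellPoly _ x, mul_sum, sum_mul, mul_assoc]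
  refine sum_comm' fun k l ↦ ?_
  simp only [mem_range, mem_Icc]
  omega

end CommRing

/-- `B^L_{n,r}(α) = Σ_{l=0}^n (Σ_{k=l}^n L_r(n,k) s(k,l)) B_l(α)`, where `s(k,l)` are the
signed Stirling numbers of the first kind and `B_l` the Bell polynomials. -/
theorem lahBellExt_poly_eq_sum_bellPoly (n r : ℕ) (α : ℝ) :
    ∑ k ∈ Finset.range (n + 1), (rLah r n k : ℝ) * α ^ k =
      ∑ l ∈ Finset.range (n + 1),
        (∑ k ∈ Finset.Icc l n, (rLah r n k : ℝ) * (stirling1 k l : ℝ)) *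
          (∑ j ∈ Finset.range (l + 1), (stirling2 l j : ℝ) * α ^ j) :=
  sum_mul_pow_eq_sum_bellPoly (fun k ↦ (rLah r n k : ℝ)) n α
end

section
/- For every nonnegative integer k and r, as formal power series, Σ_{n=k}^{∞} L_r(n,k) t^n/n! = (1/k!) (t/(1-t))^k (1/(1-t))^{2r}. -/
open Finset

/-! The coefficient of `t^(m+k)` is `t^k / k!` times `C(m+s-1, m) t^m` with `s = k + 2r`, and
`Σ_m C(m+s-1, m) t^m = (1-t)^(-s)` is the negative binomial series. -/

theorem rLah_of_lt {r n k : ℕ} (h : n < k) : rLah r n k = 0 :=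
  if_neg (Nat.not_le.mpr h)

theorem rLah_add_mul_factorial (r m k : ℕ) :
    rLah r (m + k) k * k.factorial = (m + k).factorial * (m + (k + 2 * r) - 1).choose m := by
  rw [rLah, if_pos (Nat.le_add_left k m), Nat.add_sub_cancel, mul_right_comm,
    Nat.div_mul_cancel (Nat.factorial_dvd_factorial (Nat.le_add_left k m)), add_assoc]

section Field

variable {𝕜 : Type*} [NormedField 𝕜]

-- Truncated subtraction makes the case `s = 0` come out right: `C(m-1, m)` is `1` at `m = 0`
-- and `0` otherwise.
theorem hasSum_choose_add_sub_one_mul_geometric (s : ℕ) {t : 𝕜} (ht : ‖t‖ < 1) :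
    HasSum (fun m : ℕ => ((m + s - 1).choose m : 𝕜) * t ^ m) (1 / (1 - t) ^ s) := by
  cases s with
  | zero =>
    convert hasSum_ite_eq (0 : ℕ) (1 : 𝕜) using 1
    · funext m
      rcases m with _ | m <;> simp
    · simp
  | succ s =>
    simpa [← add_assoc, Nat.choose_symm_add] using hasSum_choose_mul_geometric_of_norm_lt_one s ht

variable [CharZero 𝕜]

theorem rLah_add_mul_pow_div_factorial (r m k : ℕ) (t : 𝕜) :
    (rLah r (m + k) k : 𝕜) * t ^ (m + k) / (m + k).factorial =
      ((m + (k + 2 * r) - 1).choose m : 𝕜) * t ^ m * (t ^ k / k.factorial) := by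
  have hcoeff : (rLah r (m + k) k : 𝕜) * k.factorial =
      (m + k).factorial * ((m + (k + 2 * r) - 1).choose m : 𝕜) := by
    exact_mod_cast rLah_add_mul_factorial r m k
  have hk : (k.factorial : 𝕜) ≠ 0 := Nat.cast_ne_zero.mpr k.factorial_ne_zero
  have hmk : ((m + k).factorial : 𝕜) ≠ 0 := Nat.cast_ne_zero.mpr (m + k).factorial_ne_zero
  rw [mul_div_assoc', div_eq_div_iff hmk hk, pow_add]
  linear_combination t ^ m * t ^ k * hcoeff

theorem hasSum_rLah_mul_pow_div_factorial (r k : ℕ) {t : 𝕜} (ht : ‖t‖ < 1) :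
    HasSum (fun n : ℕ => (rLah r n k : 𝕜) * t ^ n / n.factorial)
      (t ^ k / k.factorial / (1 - t) ^ (k + 2 * r)) := by
  have hhead : ∑ n ∈ range k, (rLah r n k : 𝕜) * t ^ n / n.factorial = 0 :=
    sum_eq_zero fun n hn => by simp [rLah_of_lt (mem_range.mp hn)]
  rw [← hasSum_nat_add_iff' k, hhead, sub_zero]
  simp only [rLah_add_mul_pow_div_factorial]
  simpa only [one_div_mul_eq_div] using
    (hasSum_choose_add_sub_one_mul_geometric (k + 2 * r) ht).mul_right (t ^ k / k.factorial)

end Field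

/-- Generating function of the `r`-Lah numbers: for `|t| < 1`,
`Σ_{n≥k} L_r(n,k) t^n/n! = (1/k!) (t/(1-t))^k (1/(1-t))^{2r}`, and the series converges.
(Here `L_r(n,k) = 0` for `n < k`, so the sum may run over all `n`.) -/
theorem rLah_egf (k r : ℕ) (t : ℝ) (ht : |t| < 1) :
    Summable (fun n : ℕ => (rLah r n k : ℝ) * t ^ n / n.factorial) ∧
    ∑' n : ℕ, (rLah r n k : ℝ) * t ^ n / n.factorial =
      (1 / k.factorial : ℝ) * (t / (1 - t)) ^ k * (1 / (1 - t)) ^ (2 * r) := by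
  have hsum := hasSum_rLah_mul_pow_div_factorial r k (t := t) (by rwa [Real.norm_eq_abs])
  refine ⟨hsum.summable, hsum.tsum_eq.trans ?_⟩
  rw [div_pow, one_div_pow, pow_add]
  ring
end
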